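/- On ℝ[y₁,…,yₙ], the following two operator identities hold: g∘tr = (𝒩 + 𝒞 − 1)∘(𝒩 − 𝒞 − 1) and tr∘g = (𝒩 + 𝒞 + 1)∘(𝒩 − 𝒞 + 1), where 𝒩 = N + n/2 and 𝒞 is the diagonal square-root-of-Casimir operator. -/

import Mathlib

open MvPolynomial Finset

/-- The index-counting (Euler) operator `N = Σᵢ yᵢ ∂/∂yᵢ` on `ℝ[y₁,…,yₙ]`. -/
noncomputable def opN (n : ℕ) : Module.End ℝ (MvPolynomial (Fin n) ℝ) :=
  ∑ i : Fin n, (LinearMap.mulLeft ℝ (X i)) ∘ₗ (pderiv i).toLinearMap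

/-- Multiplication by `Σᵢ yᵢ²` on `ℝ[y₁,…,yₙ]`. -/
noncomputable def opG (n : ℕ) : Module.End ℝ (MvPolynomial (Fin n) ℝ) :=
  LinearMap.mulLeft ℝ (∑ i : Fin n, X i ^ 2)

/-- The trace (Laplacian) operator `tr = Σᵢ ∂²/∂yᵢ²` on `ℝ[y₁,…,yₙ]`. -/
noncomputable def opTr (n : ℕ) : Module.End ℝ (MvPolynomial (Fin n) ℝ) :=
  ∑ i : Fin n, (pderiv i).toLinearMap ∘ₗ (pderiv i).toLinearMap

/-! The commutation relations `[𝒩, g] = 2g` and `[tr, g] = 4𝒩` make `g^k Φ`, for `Φ` harmonic and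
homogeneous of degree `s`, a joint eigenvector of `𝒩`, `g∘tr` and `tr∘g`; there `𝒩 ± 𝒞` act by the
scalars `s + 2k + n - 1` and `2k + 1`, and both identities reduce to scalar identities. Since `𝒞` is
only pinned down on such vectors, the remaining point is the Fischer decomposition: the `g^k Φ`
span `ℝ[y]`. By induction on the degree: `tr∘g` multiplies `g^k Φ` by `(2k+2)(2s+2k+n) > 0`, so
for `p` homogeneous there is `q` of degree two less with `tr (g q) = tr p`, and `p - g q` is
harmonic. -/

variable {n : ℕ}

lemma opN_apply (p : MvPolynomial (Fin n) ℝ) : opN n p = ∑ i : Fin n, X i * pderiv i p := by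
  simp [opN]

lemma opG_apply (p : MvPolynomial (Fin n) ℝ) : opG n p = (∑ i : Fin n, X i ^ 2) * p := rfl

lemma opTr_apply (p : MvPolynomial (Fin n) ℝ) :
    opTr n p = ∑ i : Fin n, pderiv i (pderiv i p) := by
  simp [opTr]

lemma opN_apply_of_isHomogeneous {p : MvPolynomial (Fin n) ℝ} {d : ℕ} (h : p.IsHomogeneous d) :
    opN n p = (d : ℝ) • p := by
  rw [opN_apply, h.sum_X_mul_pderiv, Nat.cast_smul_eq_nsmul]

lemma pderiv_sum_X_sq (i : Fin n) :
    pderiv i (∑ j : Fin n, X j ^ 2 : MvPolynomial (Fin n) ℝ) = 2 * X i := by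
  simp [Derivation.leibniz_pow, Pi.single_apply]

lemma opN_mul_opG : opN n * opG n = opG n * opN n + (2 : ℝ) • opG n := by
  refine LinearMap.ext fun p => ?_
  have term : ∀ i : Fin n, X i * pderiv i ((∑ j : Fin n, X j ^ 2) * p) =
      (∑ j : Fin n, X j ^ 2) * (X i * pderiv i p) + (2 : ℝ) • (X i ^ 2 * p) := fun i => by
    simp only [Derivation.leibniz, pderiv_sum_X_sq, smul_eq_mul, smul_eq_C_mul, map_ofNat]
    ring
  simp only [Module.End.mul_apply, LinearMap.add_apply, LinearMap.smul_apply, opN_apply,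
    opG_apply, term, Finset.sum_add_distrib, ← Finset.smul_sum, ← Finset.mul_sum,
    ← Finset.sum_mul]

lemma opTr_mul_opG :
    opTr n * opG n = opG n * opTr n + (4 : ℝ) • opN n + (2 * n : ℝ) • 1 := by
  refine LinearMap.ext fun p => ?_
  have term : ∀ i : Fin n, pderiv i (pderiv i ((∑ j : Fin n, X j ^ 2) * p)) =
      (∑ j : Fin n, X j ^ 2) * pderiv i (pderiv i p) + (4 : ℝ) • (X i * pderiv i p) +
        (2 : ℝ) • p := fun i => by
    have pderiv_two : pderiv i (2 : MvPolynomial (Fin n) ℝ) = 0 := by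
      simpa using (pderiv i).map_natCast 2
    simp only [Derivation.leibniz, map_add, pderiv_sum_X_sq, pderiv_X_self, pderiv_two,
      smul_eq_mul, smul_eq_C_mul, map_ofNat]
    ring
  simp only [Module.End.mul_apply, LinearMap.add_apply, LinearMap.smul_apply, Module.End.one_apply,
    opTr_apply, opN_apply, opG_apply, term, Finset.sum_add_distrib, ← Finset.smul_sum,
    ← Finset.mul_sum, Finset.sum_const, Finset.card_univ, Fintype.card_fin]
  rw [mul_smul, Nat.cast_smul_eq_nsmul]

lemma opN_opG_apply {x : MvPolynomial (Fin n) ℝ} {a : ℝ} (hx : opN n x = a • x) :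
    opN n (opG n x) = (a + 2) • opG n x := by
  rw [← Module.End.mul_apply, opN_mul_opG, LinearMap.add_apply, Module.End.mul_apply, hx, map_smul,
    LinearMap.smul_apply, ← add_smul]

lemma opTr_opG_apply {x : MvPolynomial (Fin n) ℝ} {a : ℝ} (hx : opN n x = a • x) :
    opTr n (opG n x) = opG n (opTr n x) + (4 * a + 2 * n) • x := by
  rw [← Module.End.mul_apply, opTr_mul_opG]
  simp only [LinearMap.add_apply, Module.End.mul_apply, LinearMap.smul_apply, Module.End.one_apply,
    hx]
  module

lemma opN_opG_pow_apply {Φ : MvPolynomial (Fin n) ℝ} {s : ℝ} (hΦ : opN n Φ = s • Φ) (k : ℕ) :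
    opN n ((opG n ^ k) Φ) = (s + 2 * k) • (opG n ^ k) Φ := by
  induction k with
  | zero => simpa using hΦ
  | succ k ih =>
    rw [pow_succ', Module.End.mul_apply, opN_opG_apply ih]
    push_cast
    ring_nf

lemma opTr_opG_pow_succ_apply {Φ : MvPolynomial (Fin n) ℝ} {s : ℝ} (hN : opN n Φ = s • Φ)
    (hT : opTr n Φ = 0) (k : ℕ) :
    opTr n ((opG n ^ (k + 1)) Φ) = ((2 * k + 2) * (2 * s + 2 * k + n)) • (opG n ^ k) Φ := by
  induction k with
  | zero =>
    rw [pow_one, opTr_opG_apply hN, hT, map_zero, pow_zero, Module.End.one_apply]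
    module
  | succ k ih =>
    rw [pow_succ', Module.End.mul_apply, opTr_opG_apply (opN_opG_pow_apply hN _), ih, map_smul,
      ← Module.End.mul_apply, ← pow_succ']
    push_cast
    module

lemma opG_mul_opTr_apply_opG_pow {Φ : MvPolynomial (Fin n) ℝ} {s : ℝ} (hN : opN n Φ = s • Φ)
    (hT : opTr n Φ = 0) (k : ℕ) :
    (opG n * opTr n) ((opG n ^ k) Φ) = (2 * k * (2 * s + 2 * k + n - 2)) • (opG n ^ k) Φ := by
  cases k with
  | zero => simp [hT]
  | succ k =>
    rw [Module.End.mul_apply, opTr_opG_pow_succ_apply hN hT, map_smul, ← Module.End.mul_apply,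
      ← pow_succ']
    push_cast
    ring_nf

lemma opTr_mul_opG_apply_opG_pow {Φ : MvPolynomial (Fin n) ℝ} {s : ℝ} (hN : opN n Φ = s • Φ)
    (hT : opTr n Φ = 0) (k : ℕ) :
    (opTr n * opG n) ((opG n ^ k) Φ) = ((2 * k + 2) * (2 * s + 2 * k + n)) • (opG n ^ k) Φ := by
  rw [Module.End.mul_apply, ← Module.End.mul_apply (opG n), ← pow_succ',
    opTr_opG_pow_succ_apply hN hT]

/-- `Φ` enters through its Euler eigenvalue `s`, as in the hypothesis on `𝒞`; `d` is the degree
of `g^k Φ`. -/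
def harmonicPowers (n d : ℕ) : Set (MvPolynomial (Fin n) ℝ) :=
  {p | ∃ s k : ℕ, ∃ Φ, opN n Φ = (s : ℝ) • Φ ∧ opTr n Φ = 0 ∧ s + 2 * k = d ∧ p = (opG n ^ k) Φ}

lemma span_harmonicPowers_le_eigenspace (d : ℕ) :
    Submodule.span ℝ (harmonicPowers n d) ≤ Module.End.eigenspace (opN n) d := by
  refine Submodule.span_le.mpr ?_
  rintro _ ⟨s, k, Φ, hN, -, rfl, rfl⟩
  rw [SetLike.mem_coe, Module.End.mem_eigenspace_iff, opN_opG_pow_apply hN]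
  push_cast
  ring_nf

lemma opG_mem_span_harmonicPowers {d : ℕ} {q : MvPolynomial (Fin n) ℝ}
    (hq : q ∈ Submodule.span ℝ (harmonicPowers n d)) :
    opG n q ∈ Submodule.span ℝ (harmonicPowers n (d + 2)) := by
  refine (Submodule.span_le (p := (Submodule.span ℝ _).comap (opG n))).mpr ?_ hq
  rintro _ ⟨s, k, Φ, hN, hT, rfl, rfl⟩
  refine Submodule.subset_span ⟨s, k + 1, Φ, hN, hT, by ring, ?_⟩
  rw [pow_succ', Module.End.mul_apply]

lemma exists_mem_span_harmonicPowers_opTr_opG_eq (hn : n ≠ 0) {d : ℕ}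
    {x : MvPolynomial (Fin n) ℝ} (hx : x ∈ Submodule.span ℝ (harmonicPowers n d)) :
    ∃ q ∈ Submodule.span ℝ (harmonicPowers n d), opTr n (opG n q) = x := by
  suffices h : Submodule.span ℝ (harmonicPowers n d) ≤
      (Submodule.span ℝ (harmonicPowers n d)).map (opTr n * opG n) from h hx
  refine Submodule.span_le.mpr ?_
  rintro _ ⟨s, k, Φ, hN, hT, hd, rfl⟩
  have hc : ((2 * k + 2) * (2 * s + 2 * k + n) : ℝ) ≠ 0 := by
    have : (0 : ℝ) < n := by exact_mod_cast Nat.pos_of_ne_zero hn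
    positivity
  refine ⟨((2 * k + 2) * (2 * s + 2 * k + n) : ℝ)⁻¹ • (opG n ^ k) Φ,
    Submodule.smul_mem _ _ (Submodule.subset_span ⟨s, k, Φ, hN, hT, hd, rfl⟩), ?_⟩
  rw [map_smul, Module.End.mul_apply, ← Module.End.mul_apply (opG n), ← pow_succ',
    opTr_opG_pow_succ_apply hN hT, smul_smul, inv_mul_cancel₀ hc, one_smul]

lemma isHomogeneous_opTr {p : MvPolynomial (Fin n) ℝ} {d : ℕ} (h : p.IsHomogeneous d) :
    (opTr n p).IsHomogeneous (d - 2) := by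
  rw [opTr_apply]
  exact IsHomogeneous.sum _ _ _ fun i _ => by simpa [Nat.sub_sub] using h.pderiv.pderiv (i := i)

lemma opTr_eq_zero_of_isHomogeneous {p : MvPolynomial (Fin n) ℝ} {d : ℕ} (h : p.IsHomogeneous d)
    (hd : d < 2) : opTr n p = 0 := by
  rw [opTr_apply]
  refine Finset.sum_eq_zero fun i _ => ?_
  have h0 : (pderiv i p).IsHomogeneous 0 := by simpa [show d - 1 = 0 by omega] using h.pderiv
  rw [← totalDegree_zero_iff_isHomogeneous, totalDegree_eq_zero_iff_eq_C] at h0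
  rw [h0, pderiv_C]

lemma mem_span_harmonicPowers_of_isHomogeneous (d : ℕ) {p : MvPolynomial (Fin n) ℝ}
    (hp : p.IsHomogeneous d) : p ∈ Submodule.span ℝ (harmonicPowers n d) := by
  induction d using Nat.strong_induction_on generalizing p with
  | _ d ih =>
  by_cases htr : opTr n p = 0
  · exact Submodule.subset_span ⟨d, 0, p, opN_apply_of_isHomogeneous hp, htr, by ring, by simp⟩
  have hn : n ≠ 0 := by
    rintro rfl
    exact htr (by simp [opTr])
  obtain ⟨e, rfl⟩ : ∃ e, d = e + 2 :=
    ⟨d - 2, by have := mt (opTr_eq_zero_of_isHomogeneous hp) htr; omega⟩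
  obtain ⟨q, hq, hqp⟩ := exists_mem_span_harmonicPowers_opTr_opG_eq hn
    (ih e (by omega) (isHomogeneous_opTr hp))
  have hgq := opG_mem_span_harmonicPowers hq
  have hNgq := Module.End.mem_eigenspace_iff.mp (span_harmonicPowers_le_eigenspace _ hgq)
  have harmonic : p - opG n q ∈ harmonicPowers n (e + 2) := by
    refine ⟨e + 2, 0, p - opG n q, ?_, by rw [map_sub, hqp, sub_self], by ring, by simp⟩
    rw [map_sub, opN_apply_of_isHomogeneous hp, hNgq, smul_sub]
  simpa using add_mem (Submodule.subset_span harmonic) hgq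

lemma span_iUnion_harmonicPowers : Submodule.span ℝ (⋃ d, harmonicPowers n d) = ⊤ := by
  refine eq_top_iff.mpr fun p _ => ?_
  rw [← sum_homogeneousComponent p]
  exact Submodule.sum_mem _ fun d _ => Submodule.span_mono (Set.subset_iUnion _ d)
    (mem_span_harmonicPowers_of_isHomogeneous d (homogeneousComponent_isHomogeneous d p))

/-- `g∘tr = (𝒩+𝒞−1)∘(𝒩−𝒞−1)` and `tr∘g = (𝒩+𝒞+1)∘(𝒩−𝒞+1)`, where
`𝒩 = N + n/2` and `𝒞` is the diagonal square-root-of-Casimir operator. -/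
theorem stmt7 (n : ℕ) (C : Module.End ℝ (MvPolynomial (Fin n) ℝ))
    (hC : ∀ (s k : ℕ) (Φ : MvPolynomial (Fin n) ℝ),
      opN n Φ = (s : ℝ) • Φ → opTr n Φ = 0 →
      C ((opG n ^ k) Φ) = ((s : ℝ) + ((n : ℝ) - 2) / 2) • (opG n ^ k) Φ) :
    let NN : Module.End ℝ (MvPolynomial (Fin n) ℝ) := opN n + ((n : ℝ) / 2) • 1
    opG n * opTr n = (NN + C - 1) * (NN - C - 1) ∧
    opTr n * opG n = (NN + C + 1) * (NN - C + 1) := by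
  intro NN
  have on_generators : ∀ x ∈ ⋃ d, harmonicPowers n d,
      (opG n * opTr n) x = ((NN + C - 1) * (NN - C - 1)) x ∧
      (opTr n * opG n) x = ((NN + C + 1) * (NN - C + 1)) x := by
    rintro _ ⟨_, ⟨d, rfl⟩, s, k, Φ, hN, hT, -, rfl⟩
    rw [opG_mul_opTr_apply_opG_pow hN hT, opTr_mul_opG_apply_opG_pow hN hT]
    simp only [NN, Module.End.mul_apply, LinearMap.add_apply, LinearMap.sub_apply,
      LinearMap.smul_apply, Module.End.one_apply, opN_opG_pow_apply hN, hC s k Φ hN hT, map_add,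
      map_sub, map_smul]
    constructor <;> module
  exact ⟨LinearMap.ext_on span_iUnion_harmonicPowers fun x hx => (on_generators x hx).1,
    LinearMap.ext_on span_iUnion_harmonicPowers fun x hx => (on_generators x hx).2⟩
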